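/- arXiv:2302.10260 — 2 statements merged into one kernel-verified Lean document; each statement's English description precedes it below -/
import Mathlib

section
/- Let p : ℝ → ℝ be a positive, continuously differentiable probability density and f : ℝ → ℝ continuously differentiable, such that the product f'·p is integrable, f''·p is integrable, (log p)'·f'·p is integrable, and f'(x)·p(x) → 0 as x → ±∞. Then ∫ f'(x) · (log p)'(x) · p(x) dx = -∫ f''(x) · p(x) dx. -/
open MeasureTheory

theorem deriv_log_comp_mul_self {p : ℝ → ℝ} {x : ℝ} (hp : DifferentiableAt ℝ p x)
    (hx : p x ≠ 0) : deriv (fun y => Real.log (p y)) x * p x = deriv p x := by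
  rw [deriv.log hp hx, div_mul_cancel₀ _ hx]

theorem ibp_score_matching_general (p f : ℝ → ℝ)
    (hp : ∀ x, 0 < p x) (hpC1 : ContDiff ℝ 1 p) (hfC2 : ContDiff ℝ 2 f)
    (hint2 : MeasureTheory.Integrable (fun x => deriv (deriv f) x * p x))
    (hint3 : MeasureTheory.Integrable
      (fun x => deriv (fun y => Real.log (p y)) x * deriv f x * p x))
    (htop : Filter.Tendsto (fun x => deriv f x * p x) Filter.atTop (nhds 0))
    (hbot : Filter.Tendsto (fun x => deriv f x * p x) Filter.atBot (nhds 0)) :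
    ∫ x, deriv f x * deriv (fun y => Real.log (p y)) x * p x
      = -∫ x, deriv (deriv f) x * p x := by
  have hpd : Differentiable ℝ p := hpC1.differentiable one_ne_zero
  have hfd' : Differentiable ℝ (deriv f) :=
    (hfC2.iterate_deriv' 1 1).differentiable one_ne_zero
  have hscore (x : ℝ) :
      deriv (fun y => Real.log (p y)) x * p x = deriv p x :=
    deriv_log_comp_mul_self (hpd x) (hp x).ne'
  have hint3' : Integrable (fun x => deriv f x * deriv p x) :=
    hint3.congr <| .of_forall fun x => by
      dsimp only; rw [mul_right_comm, hscore, mul_comm]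
  calc ∫ x, deriv f x * deriv (fun y => Real.log (p y)) x * p x
      = ∫ x, deriv f x * deriv p x := by simp only [mul_assoc, hscore]
    _ = 0 - 0 - ∫ x, deriv (deriv f) x * p x :=
      integral_mul_deriv_eq_deriv_mul (fun x _ => (hfd' x).hasDerivAt)
        (fun x _ => (hpd x).hasDerivAt) hint3' hint2 hbot htop
    _ = -∫ x, deriv (deriv f) x * p x := by ring

/-- Integration by parts step of score matching in one dimension:
`∫ f' (log p)' p = -∫ f'' p`. -/
theorem ibp_score_matching (p f : ℝ → ℝ)
    (hp : ∀ x, 0 < p x) (hpC1 : ContDiff ℝ 1 p) (hfC2 : ContDiff ℝ 2 f)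
    (hint1 : MeasureTheory.Integrable (fun x => deriv f x * p x))
    (hint2 : MeasureTheory.Integrable (fun x => deriv (deriv f) x * p x))
    (hint3 : MeasureTheory.Integrable
      (fun x => deriv (fun y => Real.log (p y)) x * deriv f x * p x))
    (htop : Filter.Tendsto (fun x => deriv f x * p x) Filter.atTop (nhds 0))
    (hbot : Filter.Tendsto (fun x => deriv f x * p x) Filter.atBot (nhds 0)) :
    ∫ x, deriv f x * deriv (fun y => Real.log (p y)) x * p x
      = -∫ x, deriv (deriv f) x * p x :=
  ibp_score_matching_general p f hp hpC1 hfC2 hint2 hint3 htop hbot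
end

section
/- Let p be a C² strictly positive density on ℝ^D and f : ℝ^D → ℝ be C². Fix a distribution p_V on ℝ^D for slicing directions v with finite second moments. Then for each fixed v, under integrability and decay conditions (v^T ∇f(x) · p(x) → 0 along the direction v at infinity), E_{x∼p}[(1/2)(v^T∇f(x) − v^T∇log p(x))²] = E_{x∼p}[(1/2)(v^T∇f(x))² + v^T (Hess f)(x) v] + C(v), where C(v) = E_{x∼p}[(1/2)(v^T∇log p(x))²] does not depend on f. -/
/-!
Expanding the square and using `(∂ᵥ log p) · p = ∂ᵥ p`, the implicit objective plus `C(v)` minus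
the explicit one is `∫ (∂ᵥ² f · p + ∂ᵥ f · ∂ᵥ p) = ∫ ∂ᵥ (∂ᵥ f · p)`. The integral of a directional
derivative vanishes when the function decays along every line in direction `v`: after a linear
change of coordinates sending `v` to `(0, 1)`, this is Fubini plus the one-dimensional fundamental
theorem of calculus on each line.
-/

open MeasureTheory Measure Module Topology Filter

theorem HasLineDerivAt.hasDerivAt_line {E F : Type*} [NormedAddCommGroup E] [NormedSpace ℝ E]
    [NormedAddCommGroup F] [NormedSpace ℝ F] {g : E → F} {g' : F} {x v : E} {t : ℝ}
    (h : HasLineDerivAt ℝ g g' (x + t • v) v) :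
    HasDerivAt (fun s : ℝ => g (x + s • v)) g' t := by
  have h0 : HasDerivAt (fun s : ℝ => g (x + t • v + s • v)) g' (t - t) := by
    rw [sub_self]; exact h
  convert h0.comp_sub_const t t using 2 with s
  congr 1; module

theorem exists_continuousLinearEquiv_prod_apply_eq {E : Type*} [NormedAddCommGroup E]
    [NormedSpace ℝ E] [FiniteDimensional ℝ E] {v : E} (hv : v ≠ 0) :
    ∃ L : E ≃L[ℝ] (Fin (finrank ℝ E - 1) → ℝ) × ℝ, L v = (0, 1) := by
  have : Nontrivial E := nontrivial_iff.2 ⟨v, 0, hv⟩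
  have hdim : finrank ℝ ((Fin (finrank ℝ E - 1) → ℝ) × ℝ) = finrank ℝ E := by
    simpa using Nat.sub_add_cancel finrank_pos
  let L₀ : E ≃L[ℝ] (Fin (finrank ℝ E - 1) → ℝ) × ℝ := (ContinuousLinearEquiv.ofFinrankEq hdim).symm
  obtain ⟨M, hM⟩ := SeparatingDual.exists_continuousLinearEquiv_apply_eq (R := ℝ)
    (L₀.map_ne_zero_iff.2 hv) (show ((0 : Fin (finrank ℝ E - 1) → ℝ), (1 : ℝ)) ≠ 0 by simp)
  exact ⟨L₀.trans M, hM⟩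

section

variable {E F : Type*} [NormedAddCommGroup E] [NormedSpace ℝ E] [MeasurableSpace E]
  [NormedAddCommGroup F] [NormedSpace ℝ F] [CompleteSpace F]

theorem integral_prod_volume_eq_zero_of_hasLineDerivAt_of_tendsto {μ : Measure E} [SigmaFinite μ]
    {g g' : E × ℝ → F} (hg' : Integrable g' (μ.prod volume))
    (hg : ∀ z, HasLineDerivAt ℝ g (g' z) z (0, 1))
    (hbot : ∀ z, Tendsto (fun t : ℝ => g (z + t • (0, 1))) atBot (𝓝 0))
    (htop : ∀ z, Tendsto (fun t : ℝ => g (z + t • (0, 1))) atTop (𝓝 0)) :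
    ∫ z, g' z ∂(μ.prod volume) = 0 := by
  rw [integral_prod _ hg']
  refine integral_eq_zero_of_ae ?_
  filter_upwards [hg'.prod_right_ae] with x hx
  have hline : (fun t : ℝ => g ((x, 0) + t • (0, 1))) = fun t => g (x, t) := by ext; simp
  have hderiv (t : ℝ) : HasDerivAt (fun t => g (x, t)) (g' (x, t)) t := by
    rw [← hline]
    exact HasLineDerivAt.hasDerivAt_line (by simpa using hg (x, t))
  have hbot' := hbot (x, 0)
  have htop' := htop (x, 0)
  rw [hline] at hbot' htop'
  exact (integral_of_hasDerivAt_of_tendsto hderiv hx hbot' htop').trans (sub_self 0)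

variable [BorelSpace E] [FiniteDimensional ℝ E]

theorem integral_addHaar_prod_eq_zero_of_hasLineDerivAt_of_tendsto {μ : Measure (E × ℝ)}
    [IsAddHaarMeasure μ] {g g' : E × ℝ → F} (hg' : Integrable g' μ)
    (hg : ∀ z, HasLineDerivAt ℝ g (g' z) z (0, 1))
    (hbot : ∀ z, Tendsto (fun t : ℝ => g (z + t • (0, 1))) atBot (𝓝 0))
    (htop : ∀ z, Tendsto (fun t : ℝ => g (z + t • (0, 1))) atTop (𝓝 0)) :
    ∫ z, g' z ∂μ = 0 := by
  let ν : Measure E := addHaar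
  have hprod : ν.prod volume = addHaarScalarFactor (ν.prod volume) μ • μ :=
    isAddLeftInvariant_eq_smul _ _
  have hg'ν : Integrable g' (ν.prod volume) := by
    rw [hprod]; exact hg'.smul_measure_nnreal
  rw [isAddLeftInvariant_eq_smul μ (ν.prod volume), integral_smul_nnreal_measure,
    integral_prod_volume_eq_zero_of_hasLineDerivAt_of_tendsto hg'ν hg hbot htop, smul_zero]

theorem integral_eq_zero_of_hasLineDerivAt_of_tendsto {μ : Measure E} [IsAddHaarMeasure μ]
    {g g' : E → F} {v : E} (hg' : Integrable g' μ) (hg : ∀ x, HasLineDerivAt ℝ g (g' x) x v)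
    (hbot : ∀ x, Tendsto (fun t : ℝ => g (x + t • v)) atBot (𝓝 0))
    (htop : ∀ x, Tendsto (fun t : ℝ => g (x + t • v)) atTop (𝓝 0)) :
    ∫ x, g' x ∂μ = 0 := by
  rcases eq_or_ne v 0 with rfl | hv
  · have hzero (x : E) : g' x = 0 := (hg x).unique hasLineDerivAt_zero
    simp [hzero]
  obtain ⟨L, hL⟩ := exists_continuousLinearEquiv_prod_apply_eq hv
  have hLe : MeasurableEmbedding L.symm := L.symm.toHomeomorph.measurableEmbedding
  have hμ : μ = (μ.map L).map L.symm := by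
    simp [Measure.map_map L.symm.continuous.measurable L.continuous.measurable]
  have hLv : L.symm (0, 1) = v := by rw [← hL, L.symm_apply_apply]
  have hline (z) (t : ℝ) : L.symm (z + t • (0, 1)) = L.symm z + t • v := by
    rw [map_add, map_smul, hLv]
  have hg'L : Integrable (g' ∘ L.symm) (μ.map L) := hLe.integrable_map_iff.1 (hμ ▸ hg')
  rw [hμ, hLe.integral_map]
  refine integral_addHaar_prod_eq_zero_of_hasLineDerivAt_of_tendsto (g := g ∘ L.symm) hg'L ?_ ?_ ?_
  · intro z
    simpa only [HasLineDerivAt, Function.comp_apply, hline] using hg (L.symm z)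
  · intro z
    simpa only [Function.comp_apply, hline] using hbot (L.symm z)
  · intro z
    simpa only [Function.comp_apply, hline] using htop (L.symm z)

end

theorem fderiv_log_apply_mul {E : Type*} [NormedAddCommGroup E] [NormedSpace ℝ E] {p : E → ℝ}
    {x : E} (hp : DifferentiableAt ℝ p x) (hpx : p x ≠ 0) (v : E) :
    fderiv ℝ (fun y => Real.log (p y)) x v * p x = fderiv ℝ p x v := by
  simp only [(hp.hasFDerivAt.log hpx).fderiv, FunLike.coe_smul, Pi.smul_apply, smul_eq_mul]
  field_simp

/-- Sliced score matching identity for a fixed slicing direction `v`: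
the sliced ESM objective equals the sliced ISM objective plus a constant
`C(v)` not depending on `f`. -/
theorem sliced_score_matching (D : ℕ)
    (p f : EuclideanSpace ℝ (Fin D) → ℝ) (v : EuclideanSpace ℝ (Fin D))
    (hp : ∀ x, 0 < p x) (hpC2 : ContDiff ℝ 2 p) (hfC2 : ContDiff ℝ 2 f)
    (hdecay : ∀ x₀ : EuclideanSpace ℝ (Fin D),
      Filter.Tendsto (fun t : ℝ => fderiv ℝ f (x₀ + t • v) v * p (x₀ + t • v))
        Filter.atTop (nhds 0) ∧
      Filter.Tendsto (fun t : ℝ => fderiv ℝ f (x₀ + t • v) v * p (x₀ + t • v))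
        Filter.atBot (nhds 0))
    (hint1 : Integrable (fun x =>
      (1 / 2) * (fderiv ℝ f x v - fderiv ℝ (fun y => Real.log (p y)) x v) ^ 2
        * p x))
    (hint2 : Integrable (fun x =>
      ((1 / 2) * (fderiv ℝ f x v) ^ 2
        + fderiv ℝ (fun y => fderiv ℝ f y v) x v) * p x))
    (hint3 : Integrable (fun x =>
      (1 / 2) * (fderiv ℝ (fun y => Real.log (p y)) x v) ^ 2 * p x)) :
    ∫ x, (1 / 2) * (fderiv ℝ f x v - fderiv ℝ (fun y => Real.log (p y)) x v) ^ 2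
          * p x
      = (∫ x, ((1 / 2) * (fderiv ℝ f x v) ^ 2
            + fderiv ℝ (fun y => fderiv ℝ f y v) x v) * p x)
        + ∫ x, (1 / 2) * (fderiv ℝ (fun y => Real.log (p y)) x v) ^ 2 * p x := by
  have hpd : Differentiable ℝ p := hpC2.differentiable two_ne_zero
  have hfv : Differentiable ℝ (fun y => fderiv ℝ f y v) :=
    ((hfC2.fderiv_right (m := 1) le_rfl).clm_apply contDiff_const).differentiable one_ne_zero
  have hflux (x) : HasLineDerivAt ℝ (fun y => fderiv ℝ f y v * p y)
      (fderiv ℝ f x v * fderiv ℝ p x v + p x * fderiv ℝ (fun y => fderiv ℝ f y v) x v) x v := by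
    simpa [Pi.mul_def] using ((hfv x).hasFDerivAt.mul (hpd x).hasFDerivAt).hasLineDerivAt v
  have hsplit (x) :
      ((1 / 2) * (fderiv ℝ f x v) ^ 2 + fderiv ℝ (fun y => fderiv ℝ f y v) x v) * p x
        + (1 / 2) * (fderiv ℝ (fun y => Real.log (p y)) x v) ^ 2 * p x
        - (1 / 2) * (fderiv ℝ f x v - fderiv ℝ (fun y => Real.log (p y)) x v) ^ 2 * p x
      = fderiv ℝ f x v * fderiv ℝ p x v + p x * fderiv ℝ (fun y => fderiv ℝ f y v) x v := by
    rw [← fderiv_log_apply_mul (hpd x) (hp x).ne' v]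
    ring
  have hint := hint2.fun_add hint3
  rw [← integral_add hint2 hint3, eq_comm, ← sub_eq_zero, ← integral_sub hint hint1]
  refine (integral_congr_ae (ae_of_all _ hsplit)).trans ?_
  exact integral_eq_zero_of_hasLineDerivAt_of_tendsto
    ((hint.sub hint1).congr (ae_of_all _ hsplit)) hflux
    (fun x => (hdecay x).2) (fun x => (hdecay x).1)
end
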